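/- arXiv:2308.03242 — 4 statements merged into one kernel-verified Lean document; each statement's English description precedes it below -/
import Mathlib

section
/- Let X, Z : (0,∞) → ℝⁿ solve the mirror-descent flow Ż(t) = −σ∇f(X(t)), X(t) = ∇φ*(Z(t)) with X(0) = x₀, Z(0) = z₀, ∇φ*(z₀) = x₀. Define the Lyapunov function E(t) = tσ[f(X(t)) − f(x*)] + D_{φ*}(Z(t), z*). Then for all t > 0, E'(t) ≤ −tσ‖Ẋ(t)‖². -/
open Set Filter Topology
open scoped RealInnerProductSpace

/-!
A strongly convex differentiable `φ` is coercive, so `∇φ` is onto and `∇φ*` is its inverse; the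
strong monotonicity of `∇φ` then makes `∇φ*` σ-cocoercive, and differentiating `X = ∇φ*(Z)`
gives `σ‖Ẋ‖² ≤ ⟪Ẋ, Ż⟫ = -σ⟪∇f(X), Ẋ⟫`. On the other hand
`E' = σ(f(X) - f(x*)) + tσ⟪∇f(X), Ẋ⟫ - σ⟪∇f(X), X - x*⟫`: the first and last terms add up to
at most `0` by convexity of `f`, and the middle one is at most `-tσ‖Ẋ‖²`.
-/

noncomputable def fenchelConj {n : ℕ} (φ : EuclideanSpace ℝ (Fin n) → ℝ)
    (z : EuclideanSpace ℝ (Fin n)) : ℝ :=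
  ⨆ x : EuclideanSpace ℝ (Fin n), (⟪z, x⟫ - φ x)

section InnerProductSpace

variable {E : Type*} [NormedAddCommGroup E] [InnerProductSpace ℝ E]

def StronglyConvexWithGradient (σ : ℝ) (φ : E → ℝ) (φ' : E → E) : Prop :=
  ∀ x y, σ / 2 * ‖y - x‖ ^ 2 ≤ φ y - φ x - ⟪φ' x, y - x⟫

theorem HasGradientAt.comp_hasDerivAt [CompleteSpace E] {f : E → ℝ} {a X' : E} {X : ℝ → E}
    {t : ℝ} (hf : HasGradientAt f a (X t)) (hX : HasDerivAt X X' t) :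
    HasDerivAt (fun u => f (X u)) ⟪a, X'⟫ t := by
  rw [← InnerProductSpace.toDual_apply_apply]
  exact (hasGradientAt_iff_hasFDerivAt.mp hf).comp_hasDerivAt t hX

theorem IsLocalMin.eq_of_hasGradientAt_sub_inner [CompleteSpace E] {F : E → ℝ} {a g c : E}
    (hmin : IsLocalMin (fun w => F w - ⟪c, w⟫) a) (hF : HasGradientAt F g a) : g = c := by
  have hzero := hmin.hasFDerivAt_eq_zero
    ((hasGradientAt_iff_hasFDerivAt.mp hF).sub (innerSL ℝ c).hasFDerivAt)
  have h := DFunLike.congr_fun hzero (g - c)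
  simp only [sub_apply, InnerProductSpace.toDual_apply_apply,
    innerSL_apply_apply, zero_apply, ← inner_sub_left] at h
  exact sub_eq_zero.mp (inner_self_eq_zero.mp h)

namespace StronglyConvexWithGradient

variable {σ : ℝ} {φ : E → ℝ} {φ' : E → E}

theorem strongMonotone (h : StronglyConvexWithGradient σ φ φ') (x y : E) :
    σ * ‖x - y‖ ^ 2 ≤ ⟪φ' x - φ' y, x - y⟫ := by
  have hxy := h x y
  have hyx := h y x
  have hflip : ⟪φ' x, y - x⟫ = -⟪φ' x, x - y⟫ := by rw [← inner_neg_right, neg_sub]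
  rw [norm_sub_rev] at hxy
  rw [inner_sub_left]
  linarith

theorem sub_inner (h : StronglyConvexWithGradient σ φ φ') (z : E) :
    StronglyConvexWithGradient σ (fun y => φ y - ⟪z, y⟫) (fun x => φ' x - z) := by
  intro x y
  have hxy := h x y
  simp only [inner_sub_left, inner_sub_right] at hxy ⊢
  linarith

theorem quadratic_le (h : StronglyConvexWithGradient σ φ φ') (y : E) :
    φ 0 - ‖φ' 0‖ * ‖y‖ + σ / 2 * ‖y‖ ^ 2 ≤ φ y := by
  have h0y := h 0 y
  have hinner := neg_le_of_abs_le (abs_real_inner_le_norm (φ' 0) y)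
  simp only [sub_zero] at h0y
  linarith

theorem bddBelow_range (h : StronglyConvexWithGradient σ φ φ') (hσ : 0 < σ) :
    BddBelow (range φ) := by
  refine ⟨φ 0 - ‖φ' 0‖ ^ 2 / (2 * σ), ?_⟩
  rintro _ ⟨y, rfl⟩
  have hsq : ‖φ' 0‖ * ‖y‖ - σ / 2 * ‖y‖ ^ 2 ≤ ‖φ' 0‖ ^ 2 / (2 * σ) := by
    rw [le_div_iff₀ (by positivity)]
    nlinarith [sq_nonneg (σ * ‖y‖ - ‖φ' 0‖)]
  linarith [h.quadratic_le y]

theorem tendsto_cocompact [ProperSpace E] (h : StronglyConvexWithGradient σ φ φ')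
    (hσ : 0 < σ) : Tendsto φ (cocompact E) atTop := by
  have hpoly : Tendsto (fun r : ℝ => φ 0 - ‖φ' 0‖ * r + σ / 2 * r ^ 2) atTop atTop := by
    have hfactor : Tendsto (fun r : ℝ => r * (σ / 2 * r - ‖φ' 0‖) + φ 0) atTop atTop :=
      tendsto_atTop_add_const_right _ _ <| tendsto_id.atTop_mul_atTop₀ <|
        tendsto_atTop_add_const_right _ _ (tendsto_id.const_mul_atTop (by positivity))
    exact hfactor.congr fun r => by ring
  exact tendsto_atTop_mono h.quadratic_le (hpoly.comp tendsto_norm_cocompact_atTop)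

theorem surjective [ProperSpace E] (h : StronglyConvexWithGradient σ φ φ') (hσ : 0 < σ)
    (hφ : ∀ x, HasGradientAt φ (φ' x) x) : Function.Surjective φ' := by
  intro z
  have hcont : Continuous fun y => φ y - ⟪z, y⟫ :=
    (continuous_iff_continuousAt.2 fun x => (hφ x).differentiableAt.continuousAt).sub
      (continuous_const.inner continuous_id)
  obtain ⟨x, hx⟩ := hcont.exists_forall_le ((h.sub_inner z).tendsto_cocompact hσ)
  exact ⟨x, IsLocalMin.eq_of_hasGradientAt_sub_inner (Eventually.of_forall hx) (hφ x)⟩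

end StronglyConvexWithGradient

theorem ConvexOn.inner_le_sub_of_hasGradientAt [CompleteSpace E] {s : Set E} {f : E → ℝ}
    {x y a : E} (hf : ConvexOn ℝ s f) (hx : x ∈ s) (hy : y ∈ s) (hd : HasGradientAt f a x) :
    ⟪a, y - x⟫ ≤ f y - f x := by
  have hline : ConvexOn ℝ (AffineMap.lineMap x y ⁻¹' s) (f ∘ AffineMap.lineMap x y) :=
    hf.comp_affineMap _
  have hd' : HasDerivAt (fun u : ℝ => f (AffineMap.lineMap x y u)) ⟪a, y - x⟫ 0 :=
    (by rwa [AffineMap.lineMap_apply_zero] :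
      HasGradientAt f a (AffineMap.lineMap x y (0 : ℝ))).comp_hasDerivAt
      AffineMap.hasDerivAt_lineMap
  simpa [slope_def_field] using
    hline.le_slope_of_hasDerivAt (by simpa using hx) (by simpa using hy) zero_lt_one hd'

theorem HasDerivAt.mul_sq_norm_le_inner {X Z : ℝ → E} {X' Z' : E} {t σ : ℝ}
    (hX : HasDerivAt X X' t) (hZ : HasDerivAt Z Z' t)
    (h : ∀ᶠ s in 𝓝 t, σ * ‖X s - X t‖ ^ 2 ≤ ⟪X s - X t, Z s - Z t⟫) :
    σ * ‖X'‖ ^ 2 ≤ ⟪X', Z'⟫ := by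
  have hXs := hasDerivAt_iff_tendsto_slope.mp hX
  have hZs := hasDerivAt_iff_tendsto_slope.mp hZ
  refine le_of_tendsto_of_tendsto ((hXs.norm.pow 2).const_mul σ) (hXs.inner hZs) ?_
  filter_upwards [eventually_nhdsWithin_of_eventually_nhds h] with s hs
  simp only [slope_def_module, norm_smul, mul_pow, real_inner_smul_left, real_inner_smul_right,
    Real.norm_eq_abs, sq_abs]
  nlinarith [mul_le_mul_of_nonneg_left hs (sq_nonneg (s - t)⁻¹)]

-- With `ψ = φ*` and `w = ∇φ*(z*)` this is the Lyapunov function `E` of the mirror flow.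
theorem hasDerivAt_lyapunov [CompleteSpace E] {f ψ : E → ℝ} {X Z : ℝ → E} {X' Z' a b : E}
    {t : ℝ} (hf : HasGradientAt f a (X t)) (hψ : HasGradientAt ψ b (Z t))
    (hX : HasDerivAt X X' t) (hZ : HasDerivAt Z Z' t) (σ c : ℝ) (zs w : E) :
    HasDerivAt (fun u => u * σ * (f (X u) - c) + (ψ (Z u) - ψ zs - ⟪w, Z u - zs⟫))
      (σ * (f (X t) - c) + t * σ * ⟪a, X'⟫ + ⟪b - w, Z'⟫) t := by
  have hfX := ((hasDerivAt_id t).mul_const σ).mul ((hf.comp_hasDerivAt hX).sub_const c)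
  have hψZ := ((hψ.comp_hasDerivAt hZ).sub_const (ψ zs)).sub
    ((hasDerivAt_const t w).inner ℝ (hZ.sub_const zs))
  refine (hfX.add hψZ).congr_deriv ?_
  simp only [id, inner_zero_left, inner_sub_left]
  ring

end InnerProductSpace

section FenchelConjugate

variable {n : ℕ} {σ : ℝ} {φ : EuclideanSpace ℝ (Fin n) → ℝ}
  {φ' : EuclideanSpace ℝ (Fin n) → EuclideanSpace ℝ (Fin n)}

namespace StronglyConvexWithGradient

theorem inner_sub_le_fenchelConj (h : StronglyConvexWithGradient σ φ φ') (hσ : 0 < σ)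
    (z x : EuclideanSpace ℝ (Fin n)) : ⟪z, x⟫ - φ x ≤ fenchelConj φ z := by
  obtain ⟨m, hm⟩ := (h.sub_inner z).bddBelow_range hσ
  refine le_ciSup (f := fun x => ⟪z, x⟫ - φ x) ⟨-m, ?_⟩ x
  rintro _ ⟨y, rfl⟩
  linarith [hm ⟨y, rfl⟩]

theorem fenchelConj_apply (h : StronglyConvexWithGradient σ φ φ') (hσ : 0 ≤ σ)
    (x : EuclideanSpace ℝ (Fin n)) : fenchelConj φ (φ' x) = ⟪φ' x, x⟫ - φ x := by
  have hle : ∀ y, ⟪φ' x, y⟫ - φ y ≤ ⟪φ' x, x⟫ - φ x := fun y => by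
    have hxy := h x y
    rw [inner_sub_right] at hxy
    nlinarith [sq_nonneg ‖y - x‖]
  exact le_antisymm (ciSup_le hle) (le_ciSup ⟨_, forall_mem_range.2 hle⟩ x)

theorem eq_of_hasGradientAt_fenchelConj (h : StronglyConvexWithGradient σ φ φ') (hσ : 0 < σ)
    {x g : EuclideanSpace ℝ (Fin n)} (hg : HasGradientAt (fenchelConj φ) g (φ' x)) : g = x := by
  refine IsLocalMin.eq_of_hasGradientAt_sub_inner (Eventually.of_forall fun w => ?_) hg
  have hyoung := h.inner_sub_le_fenchelConj hσ w x
  simp only [h.fenchelConj_apply hσ.le, real_inner_comm x] at hyoung ⊢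
  linarith

theorem cocoercive (h : StronglyConvexWithGradient σ φ φ') (hσ : 0 < σ)
    (hφ : ∀ x, HasGradientAt φ (φ' x) x) {g : EuclideanSpace ℝ (Fin n) → EuclideanSpace ℝ (Fin n)}
    (hg : ∀ z, HasGradientAt (fenchelConj φ) (g z) z) (z w : EuclideanSpace ℝ (Fin n)) :
    σ * ‖g z - g w‖ ^ 2 ≤ ⟪g z - g w, z - w⟫ := by
  have hinv : ∀ z, φ' (g z) = z := fun z => by
    obtain ⟨x, rfl⟩ := h.surjective hσ hφ z
    rw [h.eq_of_hasGradientAt_fenchelConj hσ (hg _)]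
  have hmono := h.strongMonotone (g z) (g w)
  rwa [hinv, hinv, real_inner_comm] at hmono

end StronglyConvexWithGradient

end FenchelConjugate

theorem mirror_flow_lyapunov_deriv_general
    {n : ℕ} (f φ : EuclideanSpace ℝ (Fin n) → ℝ)
    (f' gφs : EuclideanSpace ℝ (Fin n) → EuclideanSpace ℝ (Fin n))
    (σ : ℝ) (hσ : 0 < σ)
    -- f is convex and differentiable with L-Lipschitz gradient
    (hfconv : ConvexOn ℝ Set.univ f)
    (hfd : ∀ x, HasGradientAt f (f' x) x)
    -- φ is twice continuously differentiable and σ-strongly convex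
    (hφC2 : ContDiff ℝ 2 φ)
    (hφsc : ∀ x y, σ / 2 * ‖y - x‖ ^ 2 ≤ φ y - φ x - ⟪gradient φ x, y - x⟫)
    -- φ* is differentiable with gradient gφs
    (hgφs : ∀ z, HasGradientAt (fenchelConj φ) (gφs z) z)
    -- the solution of the mirror-descent flow
    (X Z X' Z' : ℝ → EuclideanSpace ℝ (Fin n))
    (xs zs : EuclideanSpace ℝ (Fin n))
    (hX : ∀ t, 0 < t → HasDerivAt X (X' t) t)
    (hZ : ∀ t, 0 < t → HasDerivAt Z (Z' t) t)
    (hflow₁ : ∀ t, 0 < t → Z' t = -σ • f' (X t))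
    (hflow₂ : ∀ t, 0 < t → X t = gφs (Z t))
    -- x* is a global minimizer of f and ∇φ*(z*) = x*
    (hzs : gφs zs = xs) :
    ∀ t, 0 < t →
      deriv (fun u => u * σ * (f (X u) - f xs) +
          (fenchelConj φ (Z u) - fenchelConj φ zs - ⟪gφs zs, Z u - zs⟫)) t
        ≤ -(t * σ) * ‖X' t‖ ^ 2 := by
  intro t ht
  have hcoco := StronglyConvexWithGradient.cocoercive hφsc hσ
    (fun x => ((hφC2.differentiable (by norm_num)) x).hasGradientAt) hgφs
  have hmono : σ * ‖X' t‖ ^ 2 ≤ ⟪X' t, Z' t⟫ :=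
    (hX t ht).mul_sq_norm_le_inner (hZ t ht) <| by
      filter_upwards [eventually_gt_nhds ht] with s hs
      rw [hflow₂ s hs, hflow₂ t ht]
      exact hcoco _ _
  have hdescent : ⟪f' (X t), X' t⟫ ≤ -‖X' t‖ ^ 2 := by
    rw [hflow₁ t ht, real_inner_smul_right, real_inner_comm] at hmono
    nlinarith
  have hgap : f (X t) - f xs ≤ ⟪f' (X t), X t - xs⟫ := by
    have hconv := hfconv.inner_le_sub_of_hasGradientAt (mem_univ _) (mem_univ xs) (hfd (X t))
    rw [← neg_sub (X t) xs, inner_neg_right] at hconv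
    linarith
  rw [(hasDerivAt_lyapunov (hfd (X t)) (hgφs (Z t)) (hX t ht) (hZ t ht) σ (f xs) zs
    (gφs zs)).deriv, ← hflow₂ t ht, hzs, hflow₁ t ht, real_inner_smul_right,
    real_inner_comm (f' (X t))]
  linarith [mul_le_mul_of_nonneg_left hgap hσ.le,
    mul_le_mul_of_nonneg_left hdescent (mul_pos ht hσ).le]

/-- Theorem 1: along the mirror-descent flow `Ż = -σ∇f(X)`, `X = ∇φ*(Z)`, the Lyapunov
function `E(t) = tσ[f(X(t)) − f(x*)] + D_{φ*}(Z(t), z*)` satisfies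
`E'(t) ≤ −tσ‖Ẋ(t)‖²` for all `t > 0`. -/
theorem mirror_flow_lyapunov_deriv
    {n : ℕ} (f φ : EuclideanSpace ℝ (Fin n) → ℝ)
    (f' gφs : EuclideanSpace ℝ (Fin n) → EuclideanSpace ℝ (Fin n))
    (σ L : ℝ) (hσ : 0 < σ)
    -- f is convex and differentiable with L-Lipschitz gradient
    (hfconv : ConvexOn ℝ Set.univ f)
    (hfd : ∀ x, HasGradientAt f (f' x) x)
    (hfL : ∀ x y, ‖f' x - f' y‖ ≤ L * ‖x - y‖)
    -- φ is twice continuously differentiable and σ-strongly convex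
    (hφC2 : ContDiff ℝ 2 φ)
    (hφsc : ∀ x y, σ / 2 * ‖y - x‖ ^ 2 ≤ φ y - φ x - ⟪gradient φ x, y - x⟫)
    -- φ* is differentiable with gradient gφs
    (hgφs : ∀ z, HasGradientAt (fenchelConj φ) (gφs z) z)
    -- the solution of the mirror-descent flow
    (X Z X' Z' : ℝ → EuclideanSpace ℝ (Fin n))
    (x₀ z₀ xs zs : EuclideanSpace ℝ (Fin n))
    (hX : ∀ t, 0 < t → HasDerivAt X (X' t) t)
    (hZ : ∀ t, 0 < t → HasDerivAt Z (Z' t) t)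
    (hflow₁ : ∀ t, 0 < t → Z' t = -σ • f' (X t))
    (hflow₂ : ∀ t, 0 < t → X t = gφs (Z t))
    (hX0 : X 0 = x₀) (hZ0 : Z 0 = z₀) (hx₀ : gφs z₀ = x₀)
    -- x* is a global minimizer of f and ∇φ*(z*) = x*
    (hxs : ∀ x, f xs ≤ f x) (hzs : gφs zs = xs) :
    ∀ t, 0 < t →
      deriv (fun u => u * σ * (f (X u) - f xs) +
          (fenchelConj φ (Z u) - fenchelConj φ zs - ⟪gφs zs, Z u - zs⟫)) t
        ≤ -(t * σ) * ‖X' t‖ ^ 2 :=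
  mirror_flow_lyapunov_deriv_general f φ f' gφs σ hσ hfconv hfd hφC2 hφsc hgφs X Z X' Z' xs zs hX hZ
    hflow₁ hflow₂ hzs
end

section
/- Let X, Z : (0,∞) → ℝⁿ solve the mirror-descent flow Ż(t) = −σ∇f(X(t)), X(t) = ∇φ*(Z(t)) with X(0) = x₀, Z(0) = z₀, ∇φ*(z₀) = x₀. Then inf_{0 ≤ u ≤ t} ‖Ẋ(u)‖² = o(1/t²) as t → ∞; that is, t² · inf_{0 ≤ u ≤ t} ‖Ẋ(u)‖² → 0 as t → ∞. -/
open Set Filter Topology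
open scoped RealInnerProductSpace

/-!
Strong convexity makes `∇φ` and `∇φ*` mutually inverse, so `Z = ∇φ(X)` along the flow, and strong
monotonicity of `∇φ` gives `σ‖Ẋ‖² ≤ ⟪Ż, Ẋ⟫ = -σ⟪∇f(X), Ẋ⟫`: the gap `g = f(X) - f(x*)` satisfies
`ġ ≤ -‖Ẋ‖²`. The Fenchel–Young gap `W = φ*(Z) - ⟪Z, x*⟫ + φ(x*) ≥ 0` satisfies
`Ẇ = ⟪X - x*, Ż⟫ ≤ -σ g` by convexity of `f`. On `[t/2, t]`, as `g` is nonincreasing,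
`σ (t/2) g(t) ≤ W(t/2) - W(t) → 0`, so `t g(t) → 0`; and `(t/2) inf_{[0,t]} ‖Ẋ‖² ≤ g(t/2)` then gives
`t² inf_{[0,t]} ‖Ẋ‖² ≤ 4 (t/2) g(t/2) → 0`.
-/

section InnerProductSpace

variable {E : Type*} [NormedAddCommGroup E] [InnerProductSpace ℝ E]

theorem mul_norm_sq_le_inner_of_hasDerivAt {X Z : ℝ → E} {X' Z' : E} {σ t : ℝ}
    (hX : HasDerivAt X X' t) (hZ : HasDerivAt Z Z' t)
    (hmono : ∀ᶠ s in 𝓝 t, σ * ‖X s - X t‖ ^ 2 ≤ ⟪Z s - Z t, X s - X t⟫) :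
    σ * ‖X'‖ ^ 2 ≤ ⟪Z', X'⟫ := by
  have hXs := hasDerivAt_iff_tendsto_slope.1 hX
  refine le_of_tendsto_of_tendsto (((hXs.norm).pow 2).const_mul σ)
    ((hasDerivAt_iff_tendsto_slope.1 hZ).inner hXs) ?_
  filter_upwards [nhdsWithin_le_nhds hmono] with s hs
  rw [slope_def_module, slope_def_module, norm_smul, mul_pow, real_inner_smul_left,
    real_inner_smul_right, Real.norm_eq_abs, sq_abs]
  calc σ * ((s - t)⁻¹ ^ 2 * ‖X s - X t‖ ^ 2) = (s - t)⁻¹ ^ 2 * (σ * ‖X s - X t‖ ^ 2) := by ring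
    _ ≤ (s - t)⁻¹ ^ 2 * ⟪Z s - Z t, X s - X t⟫ := by gcongr
    _ = (s - t)⁻¹ * ((s - t)⁻¹ * ⟪Z s - Z t, X s - X t⟫) := by ring

variable [CompleteSpace E]

theorem HasGradientAt.hasDerivAt_comp {F : E → ℝ} {g : E} {γ : ℝ → E} {v : E} {t : ℝ}
    (hF : HasGradientAt F g (γ t)) (hγ : HasDerivAt γ v t) :
    HasDerivAt (fun s => F (γ s)) ⟪g, v⟫ t := by
  simpa [Function.comp_def] using hF.hasFDerivAt.comp_hasDerivAt t hγ

theorem HasGradientAt.eq_of_forall_add_inner_le {F : E → ℝ} {g p z : E}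
    (hF : HasGradientAt F g z) (hp : ∀ w, F z + ⟪p, w - z⟫ ≤ F w) : g = p := by
  have hmin : IsLocalMin (fun w => F w - ⟪p, w⟫) z := Eventually.of_forall fun w => by
    have := hp w
    rw [inner_sub_right] at this
    show F z - ⟪p, z⟫ ≤ F w - ⟪p, w⟫
    linarith
  have hderiv := hmin.hasFDerivAt_eq_zero (hF.hasFDerivAt.sub (innerSL ℝ p).hasFDerivAt)
  have hzero := congrArg (fun L => L (g - p)) hderiv
  simp only [sub_apply, InnerProductSpace.toDual_apply_apply, innerSL_apply_apply,
    zero_apply, ← inner_sub_left] at hzero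
  exact sub_eq_zero.1 (inner_self_eq_zero.1 hzero)

theorem ConvexOn.add_inner_le_of_hasGradientAt {s : Set E} {f : E → ℝ} {g x y : E}
    (hf : ConvexOn ℝ s f) (hx : x ∈ s) (hy : y ∈ s) (hfx : HasGradientAt f g x) :
    f x + ⟪g, y - x⟫ ≤ f y := by
  have hline := hf.comp_affineMap (AffineMap.lineMap x y)
  have hderiv : HasDerivAt (fun r : ℝ => f (AffineMap.lineMap x y r)) ⟪g, y - x⟫ 0 :=
    HasGradientAt.hasDerivAt_comp (by simpa using hfx) AffineMap.hasDerivAt_lineMap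
  have := hline.le_slope_of_hasDerivAt (x := 0) (y := 1) (by simpa using hx) (by simpa using hy)
    zero_lt_one hderiv
  simp only [slope_def_field, Function.comp_apply, AffineMap.lineMap_apply_one,
    AffineMap.lineMap_apply_zero, sub_zero, div_one] at this
  linarith

theorem mul_norm_sq_le_inner_gradient_sub {φ : E → ℝ} {σ : ℝ}
    (hφ : ∀ x y, σ / 2 * ‖y - x‖ ^ 2 ≤ φ y - φ x - ⟪gradient φ x, y - x⟫) (x y : E) :
    σ * ‖y - x‖ ^ 2 ≤ ⟪gradient φ y - gradient φ x, y - x⟫ := by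
  have hxy := hφ x y
  have hyx := hφ y x
  rw [norm_sub_rev, ← neg_sub y x, inner_neg_right] at hyx
  rw [inner_sub_left]
  linarith

end InnerProductSpace

section ProperSpace

variable {E : Type*} [NormedAddCommGroup E] [InnerProductSpace ℝ E] [ProperSpace E]
  {φ : E → ℝ} {σ : ℝ}

theorem tendsto_sub_inner_cocompact_of_strongConvex (hσ : 0 < σ)
    (hφ : ∀ x y, σ / 2 * ‖y - x‖ ^ 2 ≤ φ y - φ x - ⟪gradient φ x, y - x⟫) (w : E) :
    Tendsto (fun x => φ x - ⟪w, x⟫) (cocompact E) atTop := by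
  set c := ‖w - gradient φ 0‖
  have hbound : ∀ x : E, ‖x‖ * (σ / 2 * ‖x‖ - c) + φ 0 ≤ φ x - ⟪w, x⟫ := fun x => by
    have hgrowth := hφ 0 x
    have hcs : ⟪w - gradient φ 0, x⟫ ≤ c * ‖x‖ := real_inner_le_norm _ _
    simp only [sub_zero] at hgrowth
    rw [inner_sub_left] at hcs
    nlinarith
  have hquad : Tendsto (fun r : ℝ => r * (σ / 2 * r - c) + φ 0) atTop atTop :=
    tendsto_atTop_add_const_right _ _ (tendsto_id.atTop_mul_atTop₀
      (tendsto_atTop_add_const_right _ _ (tendsto_id.const_mul_atTop (by positivity))))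
  exact tendsto_atTop_mono hbound (hquad.comp tendsto_norm_cocompact_atTop)

theorem exists_forall_inner_sub_le_of_strongConvex (hσ : 0 < σ)
    (hφ : ∀ x y, σ / 2 * ‖y - x‖ ^ 2 ≤ φ y - φ x - ⟪gradient φ x, y - x⟫) (hφc : Continuous φ)
    (w : E) : ∃ x₀, ∀ x, ⟪w, x⟫ - φ x ≤ ⟪w, x₀⟫ - φ x₀ := by
  have hcont : Continuous fun x => φ x - ⟪w, x⟫ := hφc.sub (continuous_const.inner continuous_id)
  obtain ⟨x₀, hx₀⟩ := hcont.exists_forall_le (tendsto_sub_inner_cocompact_of_strongConvex hσ hφ w)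
  exact ⟨x₀, fun x => by linarith [hx₀ x]⟩

end ProperSpace

section FenchelConj

variable {n : ℕ} {φ : EuclideanSpace ℝ (Fin n) → ℝ} {σ : ℝ}

theorem fenchelConj_eq_of_forall_le {w x₀ : EuclideanSpace ℝ (Fin n)}
    (h : ∀ x, ⟪w, x⟫ - φ x ≤ ⟪w, x₀⟫ - φ x₀) : fenchelConj φ w = ⟪w, x₀⟫ - φ x₀ :=
  le_antisymm (ciSup_le h) (le_ciSup ⟨_, forall_mem_range.2 h⟩ x₀)

/-- `⨆` of a family unbounded above is `0`, so Fenchel–Young needs the supremum to be attained. -/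
theorem inner_sub_le_fenchelConj (hσ : 0 < σ)
    (hφ : ∀ x y, σ / 2 * ‖y - x‖ ^ 2 ≤ φ y - φ x - ⟪gradient φ x, y - x⟫) (hφc : Continuous φ)
    (w x : EuclideanSpace ℝ (Fin n)) : ⟪w, x⟫ - φ x ≤ fenchelConj φ w := by
  obtain ⟨x₀, hx₀⟩ := exists_forall_inner_sub_le_of_strongConvex hσ hφ hφc w
  exact le_ciSup ⟨_, forall_mem_range.2 hx₀⟩ x

theorem gradient_eq_of_hasGradientAt_fenchelConj (hσ : 0 < σ)
    (hφ : ∀ x y, σ / 2 * ‖y - x‖ ^ 2 ≤ φ y - φ x - ⟪gradient φ x, y - x⟫)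
    (hφd : Differentiable ℝ φ) {w x : EuclideanSpace ℝ (Fin n)}
    (hx : HasGradientAt (fenchelConj φ) x w) : gradient φ x = w := by
  -- A maximiser `x₀` of `⟪w, ·⟫ - φ` is a subgradient of `φ*` at `w`, and `w` one of `φ` at `x₀`.
  obtain ⟨x₀, hx₀⟩ := exists_forall_inner_sub_le_of_strongConvex hσ hφ hφd.continuous w
  have hconj : fenchelConj φ w = ⟪w, x₀⟫ - φ x₀ := fenchelConj_eq_of_forall_le hx₀
  have hx₀_sub : ∀ u, fenchelConj φ w + ⟪x₀, u - w⟫ ≤ fenchelConj φ u := fun u => by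
    have := inner_sub_le_fenchelConj hσ hφ hφd.continuous u x₀
    rw [hconj, inner_sub_right, real_inner_comm u, real_inner_comm w]
    linarith
  have hw_sub : ∀ y, φ x₀ + ⟪w, y - x₀⟫ ≤ φ y := fun y => by
    have := hx₀ y
    rw [inner_sub_right]
    linarith
  rw [hx.eq_of_forall_add_inner_le hx₀_sub]
  exact (hφd x₀).hasGradientAt.eq_of_forall_add_inner_le hw_sub

theorem mul_norm_sq_le_inner_of_hasGradientAt_fenchelConj (hσ : 0 < σ)
    (hφ : ∀ x y, σ / 2 * ‖y - x‖ ^ 2 ≤ φ y - φ x - ⟪gradient φ x, y - x⟫)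
    (hφd : Differentiable ℝ φ) {X Z : ℝ → EuclideanSpace ℝ (Fin n)}
    {X' Z' : EuclideanSpace ℝ (Fin n)} {t : ℝ} (hX : HasDerivAt X X' t) (hZ : HasDerivAt Z Z' t)
    (hXZ : ∀ᶠ s in 𝓝 t, HasGradientAt (fenchelConj φ) (X s) (Z s)) :
    σ * ‖X'‖ ^ 2 ≤ ⟪Z', X'⟫ := by
  refine mul_norm_sq_le_inner_of_hasDerivAt hX hZ ?_
  have hgrad := gradient_eq_of_hasGradientAt_fenchelConj hσ hφ hφd hXZ.self_of_nhds
  filter_upwards [hXZ] with s hs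
  simpa only [gradient_eq_of_hasGradientAt_fenchelConj hσ hφ hφd hs, hgrad] using
    mul_norm_sq_le_inner_gradient_sub hφ (X t) (X s)

end FenchelConj

theorem image_sub_le_mul_sub_of_hasDerivAt_le {F F' : ℝ → ℝ} {a b C : ℝ} (hab : a ≤ b)
    (hF : ∀ u ∈ Icc a b, HasDerivAt F (F' u) u) (hF' : ∀ u ∈ Ioo a b, F' u ≤ C) :
    F b - F a ≤ C * (b - a) :=
  (convex_Icc a b).image_sub_le_mul_sub_of_deriv_le
    (fun u hu => (hF u hu).continuousAt.continuousWithinAt)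
    (fun u hu => (hF u (interior_subset hu)).differentiableAt.differentiableWithinAt)
    (fun u hu => by
      rw [interior_Icc] at hu
      rw [(hF u (Ioo_subset_Icc_self hu)).deriv]
      exact hF' u hu)
    a (left_mem_Icc.2 hab) b (right_mem_Icc.2 hab) hab

theorem antitoneOn_Ioi_of_hasDerivAt_nonpos {F F' : ℝ → ℝ} {a : ℝ}
    (hF : ∀ u, a < u → HasDerivAt F (F' u) u) (hF' : ∀ u, a < u → F' u ≤ 0) :
    AntitoneOn F (Ioi a) :=
  antitoneOn_of_hasDerivWithinAt_nonpos (convex_Ioi a)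
    (fun u hu => (hF u hu).continuousAt.continuousWithinAt)
    (fun u hu => by
      rw [interior_Ioi] at hu
      exact (hF u hu).hasDerivWithinAt)
    (fun u hu => by
      rw [interior_Ioi] at hu
      exact hF' u hu)

theorem AntitoneOn.exists_tendsto_atTop {W : ℝ → ℝ} {a : ℝ} (hW : AntitoneOn W (Ioi a))
    (hbdd : BddBelow (W '' Ioi a)) : ∃ l, Tendsto W atTop (𝓝 l) := by
  set V := fun t => W (max t (a + 1))
  have hmem : ∀ t, max t (a + 1) ∈ Ioi a := fun t =>
    lt_of_lt_of_le (lt_add_one a) (le_max_right _ _)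
  have hV : Antitone V := fun s t hst => hW (hmem s) (hmem t) (max_le_max_right _ hst)
  have hVbdd : BddBelow (range V) :=
    hbdd.mono (range_subset_iff.2 fun t => mem_image_of_mem W (hmem t))
  refine ⟨_, (tendsto_atTop_ciInf hV hVbdd).congr' ?_⟩
  filter_upwards [eventually_ge_atTop (a + 1)] with t ht
  simp only [V, max_eq_left ht]

theorem tendsto_mul_of_hasDerivAt_le_neg_mul {g g' W W' : ℝ → ℝ} {σ : ℝ} (hσ : 0 < σ)
    (hg0 : ∀ t, 0 ≤ g t) (hg : ∀ t, 0 < t → HasDerivAt g (g' t) t)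
    (hg' : ∀ t, 0 < t → g' t ≤ 0) (hWbdd : BddBelow (W '' Ioi 0))
    (hW : ∀ t, 0 < t → HasDerivAt W (W' t) t) (hW' : ∀ t, 0 < t → W' t ≤ -(σ * g t)) :
    Tendsto (fun t => t * g t) atTop (𝓝 0) := by
  have hg_anti := antitoneOn_Ioi_of_hasDerivAt_nonpos hg hg'
  have hW_anti : AntitoneOn W (Ioi 0) := antitoneOn_Ioi_of_hasDerivAt_nonpos hW fun t ht =>
    (hW' t ht).trans (neg_nonpos.2 (mul_nonneg hσ.le (hg0 t)))
  have hstep : ∀ t, 0 < t → σ / 2 * (t * g t) ≤ W (t / 2) - W t := fun t ht => by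
    have := image_sub_le_mul_sub_of_hasDerivAt_le (a := t / 2) (b := t) (C := -(σ * g t))
      (by linarith) (fun u hu => hW u (by linarith [hu.1]))
      (fun u hu => (hW' u (by linarith [hu.1])).trans (neg_le_neg (mul_le_mul_of_nonneg_left
        (hg_anti (mem_Ioi.2 (by linarith [hu.1])) (mem_Ioi.2 ht) hu.2.le) hσ.le)))
    linarith
  obtain ⟨l, hl⟩ := hW_anti.exists_tendsto_atTop hWbdd
  have hdiff : Tendsto (fun t => 2 / σ * (W (t / 2) - W t)) atTop (𝓝 0) := by
    simpa using ((hl.comp (tendsto_id.atTop_div_const two_pos)).sub hl).const_mul (2 / σ)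
  refine tendsto_of_tendsto_of_tendsto_of_le_of_le' tendsto_const_nhds hdiff ?_ ?_
  · filter_upwards [eventually_ge_atTop 0] with t ht using mul_nonneg ht (hg0 t)
  · filter_upwards [eventually_gt_atTop 0] with t ht
    rw [div_mul_eq_mul_div, le_div_iff₀ hσ]
    linarith [hstep t ht]

theorem tendsto_sq_mul_sInf_of_hasDerivAt_le_neg {g g' v : ℝ → ℝ} (hv : ∀ t, 0 ≤ v t)
    (hg0 : ∀ t, 0 ≤ g t) (hg : ∀ t, 0 < t → HasDerivAt g (g' t) t)
    (hg' : ∀ t, 0 < t → g' t ≤ -v t) (htg : Tendsto (fun t => t * g t) atTop (𝓝 0)) :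
    Tendsto (fun t => t ^ 2 * sInf (v '' Icc 0 t)) atTop (𝓝 0) := by
  have hbdd : ∀ t, BddBelow (v '' Icc 0 t) := fun t => ⟨0, forall_mem_image.2 fun u _ => hv u⟩
  have hstep : ∀ t, 0 < t → t ^ 2 * sInf (v '' Icc 0 t) ≤ 4 * (t / 2 * g (t / 2)) :=
      fun t ht => by
    have := image_sub_le_mul_sub_of_hasDerivAt_le (a := t / 2) (b := t)
      (C := -sInf (v '' Icc 0 t)) (by linarith)
      (fun u hu => hg u (by linarith [hu.1])) (fun u hu => (hg' u (by linarith [hu.1])).trans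
        (neg_le_neg (csInf_le (hbdd t) (mem_image_of_mem v ⟨by linarith [hu.1], hu.2.le⟩))))
    nlinarith [hg0 t]
  have hlim : Tendsto (fun t => 4 * (t / 2 * g (t / 2))) atTop (𝓝 0) := by
    simpa using (htg.comp (tendsto_id.atTop_div_const two_pos)).const_mul 4
  refine tendsto_of_tendsto_of_tendsto_of_le_of_le' tendsto_const_nhds hlim ?_ ?_
  · filter_upwards [eventually_ge_atTop 0] with t ht
    exact mul_nonneg (sq_nonneg t)
      (le_csInf ((nonempty_Icc.2 ht).image v) (forall_mem_image.2 fun u _ => hv u))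
  · filter_upwards [eventually_gt_atTop 0] with t ht using hstep t ht

theorem mirror_flow_velocity_rate_general
{n : ℕ} (f φ : EuclideanSpace ℝ (Fin n) → ℝ)
    (f' gφs : EuclideanSpace ℝ (Fin n) → EuclideanSpace ℝ (Fin n))
    (σ : ℝ) (hσ : 0 < σ)
    -- f is convex and differentiable with L-Lipschitz gradient
    (hfconv : ConvexOn ℝ Set.univ f)
    (hfd : ∀ x, HasGradientAt f (f' x) x)
    -- φ is twice continuously differentiable and σ-strongly convex
    (hφC2 : ContDiff ℝ 2 φ)
    (hφsc : ∀ x y, σ / 2 * ‖y - x‖ ^ 2 ≤ φ y - φ x - ⟪gradient φ x, y - x⟫)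
    -- φ* is differentiable with gradient gφs
    (hgφs : ∀ z, HasGradientAt (fenchelConj φ) (gφs z) z)
    -- the solution of the mirror-descent flow
    (X Z X' Z' : ℝ → EuclideanSpace ℝ (Fin n))
    (xs : EuclideanSpace ℝ (Fin n))
    (hX : ∀ t, 0 < t → HasDerivAt X (X' t) t)
    (hZ : ∀ t, 0 < t → HasDerivAt Z (Z' t) t)
    (hflow₁ : ∀ t, 0 < t → Z' t = -σ • f' (X t))
    (hflow₂ : ∀ t, 0 < t → X t = gφs (Z t))
    -- x* is a global minimizer of f and ∇φ*(z*) = x*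
    (hxs : ∀ x, f xs ≤ f x) :
    Tendsto (fun t : ℝ => t ^ 2 * sInf ((fun u => ‖X' u‖ ^ 2) '' Set.Icc 0 t))
      atTop (𝓝 0) := by
  have hφd : Differentiable ℝ φ := hφC2.differentiable (by norm_num)
  have hvel : ∀ t, 0 < t → ⟪f' (X t), X' t⟫ ≤ -‖X' t‖ ^ 2 := fun t ht => by
    have hmono := mul_norm_sq_le_inner_of_hasGradientAt_fenchelConj hσ hφsc hφd (hX t ht)
      (hZ t ht) (by filter_upwards [eventually_gt_nhds ht] with s hs; exact hflow₂ s hs ▸ hgφs _)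
    rw [hflow₁ t ht, real_inner_smul_left] at hmono
    nlinarith
  have hgap : ∀ t, 0 < t → HasDerivAt (fun t => f (X t) - f xs) ⟪f' (X t), X' t⟫ t :=
    fun t ht => ((hfd (X t)).hasDerivAt_comp (hX t ht)).sub_const _
  have hW : ∀ t, 0 < t → HasDerivAt (fun t => fenchelConj φ (Z t) - ⟪Z t, xs⟫ + φ xs)
      ⟪X t - xs, Z' t⟫ t := fun t ht => by
    have := (((hgφs (Z t)).hasDerivAt_comp (hZ t ht)).sub
      ((hZ t ht).inner ℝ (hasDerivAt_const t xs))).add_const (φ xs)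
    rwa [← hflow₂ t ht, inner_zero_right, zero_add, real_inner_comm xs, ← inner_sub_left] at this
  have hW' : ∀ t, 0 < t → ⟪X t - xs, Z' t⟫ ≤ -(σ * (f (X t) - f xs)) := fun t ht => by
    have hconv := hfconv.add_inner_le_of_hasGradientAt (mem_univ _) (mem_univ xs) (hfd (X t))
    rw [← neg_sub, inner_neg_right, real_inner_comm] at hconv
    rw [hflow₁ t ht, real_inner_smul_right]
    nlinarith
  refine tendsto_sq_mul_sInf_of_hasDerivAt_le_neg (fun t => sq_nonneg _)
    (fun t => sub_nonneg.2 (hxs _)) hgap hvel ?_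
  refine tendsto_mul_of_hasDerivAt_le_neg_mul hσ (fun t => sub_nonneg.2 (hxs _)) hgap
    (fun t ht => (hvel t ht).trans (neg_nonpos.2 (sq_nonneg _))) ⟨0, ?_⟩ hW hW'
  rintro _ ⟨t, -, rfl⟩
  linarith [inner_sub_le_fenchelConj hσ hφsc hφd.continuous (Z t) xs]

/-- Along the mirror-descent flow, `inf_{0 ≤ u ≤ t} ‖Ẋ(u)‖² = o(1/t²)` as `t → ∞`. -/
theorem mirror_flow_velocity_rate
{n : ℕ} (f φ : EuclideanSpace ℝ (Fin n) → ℝ)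
    (f' gφs : EuclideanSpace ℝ (Fin n) → EuclideanSpace ℝ (Fin n))
    (σ L : ℝ) (hσ : 0 < σ)
    -- f is convex and differentiable with L-Lipschitz gradient
    (hfconv : ConvexOn ℝ Set.univ f)
    (hfd : ∀ x, HasGradientAt f (f' x) x)
    (hfL : ∀ x y, ‖f' x - f' y‖ ≤ L * ‖x - y‖)
    -- φ is twice continuously differentiable and σ-strongly convex
    (hφC2 : ContDiff ℝ 2 φ)
    (hφsc : ∀ x y, σ / 2 * ‖y - x‖ ^ 2 ≤ φ y - φ x - ⟪gradient φ x, y - x⟫)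
    -- φ* is differentiable with gradient gφs
    (hgφs : ∀ z, HasGradientAt (fenchelConj φ) (gφs z) z)
    -- the solution of the mirror-descent flow
    (X Z X' Z' : ℝ → EuclideanSpace ℝ (Fin n))
    (x₀ z₀ xs zs : EuclideanSpace ℝ (Fin n))
    (hX : ∀ t, 0 < t → HasDerivAt X (X' t) t)
    (hZ : ∀ t, 0 < t → HasDerivAt Z (Z' t) t)
    (hflow₁ : ∀ t, 0 < t → Z' t = -σ • f' (X t))
    (hflow₂ : ∀ t, 0 < t → X t = gφs (Z t))
    (hX0 : X 0 = x₀) (hZ0 : Z 0 = z₀) (hx₀ : gφs z₀ = x₀)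
    -- x* is a global minimizer of f and ∇φ*(z*) = x*
    (hxs : ∀ x, f xs ≤ f x) (hzs : gφs zs = xs) :
    Tendsto (fun t : ℝ => t ^ 2 * sInf ((fun u => ‖X' u‖ ^ 2) '' Set.Icc 0 t))
      atTop (𝓝 0) :=
  mirror_flow_velocity_rate_general f φ f' gφs σ hσ hfconv hfd hφC2 hφsc hgφs X Z X' Z' xs hX hZ
    hflow₁ hflow₂ hxs
end

section
/- Let X, Z : (0,∞) → ℝⁿ solve the high-resolution accelerated mirror descent ODE Ż(t) = −(tσ/2)∇f(X(t)), Ẋ(t) = (2/t)∇φ*(Z(t)) − (2/t)X(t) − √s ∇f(X(t)), with X(0) = x₀, Z(0) = z₀, ∇φ*(z₀) = x₀, Ẋ(0) = 0, where s > 0 is fixed. Then inf_{0 ≤ u ≤ t} ‖∇f(X(u))‖² = o(1/t³) as t → ∞; that is, t³ · inf_{0 ≤ u ≤ t} ‖∇f(X(u))‖² → 0 as t → ∞. -/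
/-!
The energy `E(t) = (σ/4) t² (f(X t) - f x*) + D_{φ*}(Z t, z*)` is nonnegative and, along the flow,
`E'(t) ≤ -(σ √s / 4) t² ‖∇f(X t)‖²`: the dissipation comes from the gradient-correction term
`√s ∇f(X)` of the high-resolution ODE. Hence `t² ‖∇f(X t)‖²` is integrable on `(1, ∞)`, so its
integral over `[t/2, t]` tends to `0`; that integral is at least `(t/2)³ inf_{[0,t]} ‖∇f(X)‖²`.
-/

open Set Filter Topology
open scoped RealInnerProductSpace

open MeasureTheory

theorem ConvexOn.add_inner_sub_le {E : Type*} [NormedAddCommGroup E] [InnerProductSpace ℝ E]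
    [CompleteSpace E] {s : Set E} {f : E → ℝ} (hf : ConvexOn ℝ s f) {x y g : E}
    (hx : x ∈ s) (hy : y ∈ s) (hg : HasGradientAt f g x) : f x + ⟪g, y - x⟫ ≤ f y := by
  set ℓ : ℝ →ᵃ[ℝ] E := AffineMap.lineMap x y
  have hline : ConvexOn ℝ (ℓ ⁻¹' s) (f ∘ ℓ) := hf.comp_affineMap ℓ
  have hℓ0 : ℓ 0 = x := AffineMap.lineMap_apply_zero x y
  have hℓ1 : ℓ 1 = y := AffineMap.lineMap_apply_one x y
  have hd : HasDerivAt (f ∘ ℓ) ⟪g, y - x⟫ 0 := by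
    simpa using (hℓ0.symm ▸ hg.hasFDerivAt).comp_hasDerivAt (0 : ℝ) AffineMap.hasDerivAt_lineMap
  have := hline.le_slope_of_hasDerivAt (by simpa [hℓ0] using hx) (by simpa [hℓ1] using hy)
    one_pos hd
  simp only [slope_def_field, Function.comp_apply, hℓ1, hℓ0, sub_zero, div_one] at this
  linarith

theorem StrongConvexOn.bddBelow_range {E : Type*} [NormedAddCommGroup E] [NormedSpace ℝ E]
    [FiniteDimensional ℝ E] {m : ℝ} {f : E → ℝ} (hm : 0 < m) (hf : StrongConvexOn univ m f) :
    BddBelow (range f) := by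
  have hcont : Continuous f :=
    continuousOn_univ.mp ((hf.convexOn fun r => by positivity).continuousOn isOpen_univ)
  obtain ⟨x₁, -, hx₁⟩ := (isCompact_closedBall (0 : E) 1).exists_isMinOn
    ⟨0, by simp⟩ hcont.continuousOn
  set μ := f x₁
  set f₀ := f 0
  refine ⟨min μ (f₀ - (μ - f₀ - m / 2) ^ 2 / (2 * m)), ?_⟩
  rintro _ ⟨x, rfl⟩
  rcases le_or_gt ‖x‖ 1 with hx | hx
  · exact (min_le_left _ _).trans (hx₁ (by simpa using hx))
  set R := ‖x‖
  have hR : 0 < R := one_pos.trans hx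
  -- strong convexity along the segment from `0` to `x`, evaluated at the unit vector `x / R`
  have hseg := hf.2 (mem_univ x) (mem_univ 0) (by positivity : 0 ≤ 1 / R)
    (by rw [sub_nonneg, div_le_one hR]; exact hx.le) (add_sub_cancel (1 / R) 1)
  have hunit : μ ≤ f ((1 / R) • x) := hx₁ (by
    rw [Metric.mem_closedBall, dist_zero_right, norm_smul, Real.norm_of_nonneg (by positivity)]
    field_simp; exact le_rfl)
  simp only [smul_zero, add_zero, sub_zero, smul_eq_mul] at hseg
  have hlower : R * μ ≤ f x + (R - 1) * f₀ - m / 2 * (R ^ 2 - R) :=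
    calc R * μ ≤ R * (1 / R * f x + (1 - 1 / R) * f₀ - 1 / R * (1 - 1 / R) * (m / 2 * R ^ 2)) :=
          mul_le_mul_of_nonneg_left (hunit.trans hseg) hR.le
      _ = _ := by field_simp
  refine (min_le_right _ _).trans ?_
  rw [sub_le_iff_le_add, ← sub_le_iff_le_add', le_div_iff₀ (by positivity)]
  nlinarith [sq_nonneg (μ - f₀ + m * R - m / 2)]

section FenchelConj
variable {n : ℕ} {σ : ℝ} {φ : EuclideanSpace ℝ (Fin n) → ℝ}

theorem bddAbove_range_inner_sub (hσ : 0 < σ) (hφ : StrongConvexOn univ σ φ)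
    (z : EuclideanSpace ℝ (Fin n)) : BddAbove (range fun x => ⟪z, x⟫ - φ x) := by
  have hlin : UniformConcaveOn univ 0 fun x : EuclideanSpace ℝ (Fin n) => ⟪z, x⟫ :=
    uniformConcaveOn_zero.2 ((innerₛₗ ℝ z).concaveOn convex_univ)
  have hsc : StrongConvexOn univ σ (φ - fun x => ⟪z, x⟫) := by
    have := hφ.sub hlin
    rwa [add_zero] at this
  obtain ⟨C, hC⟩ := hsc.bddBelow_range hσ
  refine ⟨-C, ?_⟩
  rintro _ ⟨x, rfl⟩
  have := hC ⟨x, rfl⟩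
  simp only [Pi.sub_apply] at this
  linarith

theorem convexOn_fenchelConj (hσ : 0 < σ) (hφ : StrongConvexOn univ σ φ) :
    ConvexOn ℝ univ (fenchelConj φ) := by
  refine ⟨convex_univ, fun z₁ _ z₂ _ a b ha hb hab => ciSup_le fun x => ?_⟩
  have hsplit : ⟪a • z₁ + b • z₂, x⟫ - φ x = a * (⟪z₁, x⟫ - φ x) + b * (⟪z₂, x⟫ - φ x) := by
    rw [inner_add_left, real_inner_smul_left, real_inner_smul_left]
    linear_combination φ x * hab
  rw [hsplit, smul_eq_mul, smul_eq_mul]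
  gcongr
  · exact le_ciSup (bddAbove_range_inner_sub hσ hφ z₁) x
  · exact le_ciSup (bddAbove_range_inner_sub hσ hφ z₂) x

end FenchelConj

theorem integrableOn_Ioi_of_hasDerivAt_le {V h : ℝ → ℝ} {a c : ℝ} (hc : 0 < c)
    (hV : ∀ t ∈ Ici a, ∃ v, HasDerivAt V v t ∧ v ≤ -(c * h t)) (hV₀ : ∀ t ∈ Ici a, 0 ≤ V t)
    (hh : ContinuousOn h (Ici a)) (hh₀ : ∀ t ∈ Ici a, 0 ≤ h t) : IntegrableOn h (Ioi a) := by
  choose! v hv hvh using hV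
  have hint : ∀ b, IntegrableOn h (Icc a b) := fun b =>
    (hh.mono Icc_subset_Ici_self).integrableOn_Icc
  refine integrableOn_Ioi_of_intervalIntegral_norm_bounded (V a / c) a
    (fun b => (hint b).mono_set Ioc_subset_Icc_self) tendsto_id ?_
  filter_upwards [eventually_ge_atTop a] with b hab
  have hnorm : ∫ t in a..b, ‖h t‖ = ∫ t in a..b, h t :=
    intervalIntegral.integral_congr fun t ht =>
      Real.norm_of_nonneg (hh₀ t (by rw [uIcc_of_le hab] at ht; exact ht.1))
  have hFTC := intervalIntegral.integral_le_sub_of_hasDeriv_right_of_le (g := fun t => -V t / c)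
    (g' := fun t => -v t / c) hab
    (fun t ht => ((hv t ht.1).continuousAt.neg.div_const c).continuousWithinAt)
    (fun t ht => ((hv t (mem_Ici.2 ht.1.le)).neg.div_const c).hasDerivWithinAt) (hint b)
    (fun t ht => by
      rw [le_div_iff₀ hc]; linarith [hvh t (mem_Ici.2 ht.1.le)])
  rw [hnorm, le_div_iff₀ hc]
  have := hV₀ b (mem_Ici.2 hab)
  have := mul_le_mul_of_nonneg_right hFTC hc.le
  rw [sub_mul, div_mul_cancel₀ _ hc.ne', div_mul_cancel₀ _ hc.ne'] at this
  linarith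

theorem tendsto_intervalIntegral_half_self {G : ℝ → ℝ} {a : ℝ} (hG : IntegrableOn G (Ioi a)) :
    Tendsto (fun t => ∫ u in t / 2..t, G u) atTop (𝓝 0) := by
  have hlim := (intervalIntegral_tendsto_integral_Ioi a hG tendsto_id).sub
    (intervalIntegral_tendsto_integral_Ioi a hG (tendsto_id.atTop_div_const two_pos))
  rw [sub_self] at hlim
  refine hlim.congr' ?_
  filter_upwards [eventually_ge_atTop (2 * |a|)] with t ht
  have hII : ∀ b, a ≤ b → IntervalIntegrable G volume a b := fun b hb =>
    (intervalIntegrable_iff_integrableOn_Ioc_of_le hb).2 (hG.mono_set Ioc_subset_Ioi_self)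
  exact intervalIntegral.integral_interval_sub_left
    (hII t (by linarith [le_abs_self a, abs_nonneg a]))
    (hII _ (by simp only [id]; linarith [le_abs_self a, abs_nonneg a]))

theorem tendsto_pow_three_mul_sInf_image_Icc {g : ℝ → ℝ} {a : ℝ} (hg : ∀ u, 0 ≤ g u)
    (hG : IntegrableOn (fun u => u ^ 2 * g u) (Ioi a)) :
    Tendsto (fun t => t ^ 3 * sInf (g '' Icc 0 t)) atTop (𝓝 0) := by
  have hinf_nonneg : ∀ t, 0 ≤ sInf (g '' Icc 0 t) := fun t =>
    Real.sInf_nonneg (by rintro _ ⟨u, -, rfl⟩; exact hg u)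
  refine squeeze_zero' ?_ ?_
    (by simpa using (tendsto_intervalIntegral_half_self hG).const_mul 8)
  · filter_upwards [eventually_ge_atTop 0] with t ht
    exact mul_nonneg (by positivity) (hinf_nonneg t)
  · filter_upwards [eventually_gt_atTop (2 * |a|)] with t ht
    have ht₀ : 0 < t := by linarith [abs_nonneg a]
    set m := sInf (g '' Icc 0 t)
    have hm : ∀ u ∈ Icc (t / 2) t, (t / 2) ^ 2 * m ≤ u ^ 2 * g u := fun u hu =>
      mul_le_mul (pow_le_pow_left₀ (by positivity) hu.1 2)
        (csInf_le ⟨0, by rintro _ ⟨v, -, rfl⟩; exact hg v⟩ ⟨u, ⟨by linarith [hu.1], hu.2⟩, rfl⟩)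
        (hinf_nonneg t) (sq_nonneg u)
    have hGint : IntervalIntegrable (fun u => u ^ 2 * g u) volume (t / 2) t :=
      (intervalIntegrable_iff_integrableOn_Icc_of_le (by linarith)).2
        (hG.mono_set fun u hu => mem_Ioi.2 (by linarith [hu.1, le_abs_self a]))
    calc t ^ 3 * m = 8 * ∫ _ in t / 2..t, (t / 2) ^ 2 * m := by
          rw [intervalIntegral.integral_const, smul_eq_mul]; ring
      _ ≤ 8 * ∫ u in t / 2..t, u ^ 2 * g u := by
          gcongr
          exact intervalIntegral.integral_mono_on (by linarith) intervalIntegrable_const hGint hm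

section MirrorEnergy
variable {E : Type*} [NormedAddCommGroup E] [InnerProductSpace ℝ E] [CompleteSpace E]
  {f ψ : E → ℝ} {σ : ℝ} {xs zs : E} {X Z : ℝ → E}

/-- The Lyapunov function of the flow; its second summand is the Bregman divergence of `ψ`
between `Z t` and `zs` when `∇ψ zs = xs`. -/
noncomputable def mirrorEnergy (f ψ : E → ℝ) (σ : ℝ) (xs zs : E) (X Z : ℝ → E) (t : ℝ) : ℝ :=
  σ / 4 * t ^ 2 * (f (X t) - f xs) + (ψ (Z t) - ψ zs - ⟪xs, Z t - zs⟫)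

theorem mirrorEnergy_nonneg (hσ : 0 ≤ σ) (hxs : ∀ w, f xs ≤ f w) (hψ : ConvexOn ℝ univ ψ)
    (hzs : HasGradientAt ψ xs zs) (t : ℝ) : 0 ≤ mirrorEnergy f ψ σ xs zs X Z t := by
  have hf : 0 ≤ f (X t) - f xs := sub_nonneg.2 (hxs _)
  have hbregman := hψ.add_inner_sub_le (mem_univ zs) (mem_univ (Z t)) hzs
  unfold mirrorEnergy
  nlinarith [mul_nonneg (mul_nonneg hσ (sq_nonneg t)) hf]

theorem hasDerivAt_mirrorEnergy {gX gZ vX vZ : E} {t : ℝ} (hf : HasGradientAt f gX (X t))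
    (hψ : HasGradientAt ψ gZ (Z t)) (hX : HasDerivAt X vX t) (hZ : HasDerivAt Z vZ t) :
    HasDerivAt (mirrorEnergy f ψ σ xs zs X Z)
      (σ / 2 * t * (f (X t) - f xs) + σ / 4 * t ^ 2 * ⟪gX, vX⟫ + ⟪gZ - xs, vZ⟫) t := by
  have hfX : HasDerivAt (fun u => f (X u)) ⟪gX, vX⟫ t := by
    have := hf.hasFDerivAt.comp_hasDerivAt t hX
    simp only [InnerProductSpace.toDual_apply_apply] at this
    exact this
  have hψZ : HasDerivAt (fun u => ψ (Z u)) ⟪gZ, vZ⟫ t := by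
    have := hψ.hasFDerivAt.comp_hasDerivAt t hZ
    simp only [InnerProductSpace.toDual_apply_apply] at this
    exact this
  have hlin : HasDerivAt (fun u => ⟪xs, Z u - zs⟫) ⟪xs, vZ⟫ t := by
    have := (innerSL ℝ xs).hasFDerivAt.comp_hasDerivAt t (hZ.sub_const zs)
    simp only [innerSL_apply_apply] at this
    exact this
  have hsq : HasDerivAt (fun u : ℝ => σ / 4 * u ^ 2) (σ / 2 * t) t :=
    ((hasDerivAt_pow 2 t).const_mul (σ / 4)).congr_deriv (by ring)
  exact ((hsq.mul (hfX.sub_const (f xs))).add ((hψZ.sub_const (ψ zs)).sub hlin)).congr_deriv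
    (by rw [inner_sub_left])

/-- The `∇ψ(Z t)` terms cancel, and convexity of `f` absorbs what remains of the `1/t` terms. -/
theorem mirrorEnergy_deriv_le {β t : ℝ} {gX gZ vX vZ : E} (hσ : 0 ≤ σ) (ht : 0 < t)
    (hf : ConvexOn ℝ univ f) (hgX : HasGradientAt f gX (X t))
    (hvZ : vZ = -((t * σ) / 2) • gX)
    (hvX : vX = (2 / t) • gZ - (2 / t) • X t - β • gX) :
    σ / 2 * t * (f (X t) - f xs) + σ / 4 * t ^ 2 * ⟪gX, vX⟫ + ⟪gZ - xs, vZ⟫ ≤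
      -(σ * β / 4 * (t ^ 2 * ‖gX‖ ^ 2)) := by
  have hconv := hf.add_inner_sub_le (mem_univ (X t)) (mem_univ xs) hgX
  subst hvZ hvX
  simp only [inner_sub_right, inner_sub_left, real_inner_smul_right,
    real_inner_self_eq_norm_sq] at hconv ⊢
  rw [real_inner_comm gX gZ, real_inner_comm gX xs]
  field_simp
  nlinarith [mul_nonneg (mul_nonneg hσ ht.le) (sub_nonneg.2 hconv)]

end MirrorEnergy

theorem accelerated_mirror_flow_gradient_rate_general
{n : ℕ} (f φ : EuclideanSpace ℝ (Fin n) → ℝ)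
    (f' gφs : EuclideanSpace ℝ (Fin n) → EuclideanSpace ℝ (Fin n))
    (σ L s : ℝ) (hσ : 0 < σ) (hs : 0 < s)
    -- f is convex and differentiable with L-Lipschitz gradient
    (hfconv : ConvexOn ℝ Set.univ f)
    (hfd : ∀ x, HasGradientAt f (f' x) x)
    (hfL : ∀ x y, ‖f' x - f' y‖ ≤ L * ‖x - y‖)
    -- φ is σ-strongly convex
    (hφsc : StrongConvexOn Set.univ σ φ)
    -- φ* is differentiable with gradient gφs
    (hgφs : ∀ z, HasGradientAt (fenchelConj φ) (gφs z) z)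
    -- the solution of the high-resolution accelerated mirror descent ODE
    (X Z X' Z' : ℝ → EuclideanSpace ℝ (Fin n))
    (xs zs : EuclideanSpace ℝ (Fin n))
    (hX : ∀ t, 0 < t → HasDerivAt X (X' t) t)
    (hZ : ∀ t, 0 < t → HasDerivAt Z (Z' t) t)
    (hflow₁ : ∀ t, 0 < t → Z' t = -((t * σ) / 2) • f' (X t))
    (hflow₂ : ∀ t, 0 < t →
      X' t = (2 / t) • gφs (Z t) - (2 / t) • X t - Real.sqrt s • f' (X t))
    -- x* is a global minimizer of f and ∇φ*(z*) = x*
    (hxs : ∀ w, f xs ≤ f w) (hzs : gφs zs = xs) :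
    Tendsto (fun t : ℝ => t ^ 3 * sInf ((fun u => ‖f' (X u)‖ ^ 2) '' Set.Icc 0 t))
      atTop (𝓝 0) := by
  have hf' : Continuous f' :=
    (LipschitzWith.of_dist_le' fun x y => by simpa only [dist_eq_norm] using hfL x y).continuous
  have hXc : ContinuousOn X (Ici 1) := fun t ht =>
    (hX t (one_pos.trans_le ht)).continuousAt.continuousWithinAt
  have hψ : ConvexOn ℝ univ (fenchelConj φ) := convexOn_fenchelConj hσ hφsc
  refine tendsto_pow_three_mul_sInf_image_Icc (a := 1) (fun u => by positivity) ?_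
  refine integrableOn_Ioi_of_hasDerivAt_le (V := mirrorEnergy f (fenchelConj φ) σ xs zs X Z)
    (c := σ * Real.sqrt s / 4) (by positivity) (fun t ht => ?_)
    (fun t _ => mirrorEnergy_nonneg hσ.le hxs hψ (hzs ▸ hgφs zs) t)
    ((continuousOn_id.pow 2).mul ((hf'.comp_continuousOn hXc).norm.pow 2))
    (fun t _ => by positivity)
  have ht₀ : 0 < t := one_pos.trans_le ht
  exact ⟨_, hasDerivAt_mirrorEnergy (hfd _) (hgφs _) (hX t ht₀) (hZ t ht₀),
    mirrorEnergy_deriv_le hσ.le ht₀ hfconv (hfd _) (hflow₁ t ht₀) (hflow₂ t ht₀)⟩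

/-- Along the high-resolution accelerated mirror descent ODE,
`inf_{0 ≤ u ≤ t} ‖∇f(X(u))‖² = o(1/t³)` as `t → ∞`. -/
theorem accelerated_mirror_flow_gradient_rate
{n : ℕ} (f φ : EuclideanSpace ℝ (Fin n) → ℝ)
    (f' gφs : EuclideanSpace ℝ (Fin n) → EuclideanSpace ℝ (Fin n))
    (σ L s : ℝ) (hσ : 0 < σ) (hs : 0 < s)
    -- f is convex and differentiable with L-Lipschitz gradient
    (hfconv : ConvexOn ℝ Set.univ f)
    (hfd : ∀ x, HasGradientAt f (f' x) x)
    (hfL : ∀ x y, ‖f' x - f' y‖ ≤ L * ‖x - y‖)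
    -- φ is σ-strongly convex
    (hφsc : StrongConvexOn Set.univ σ φ)
    -- φ* is differentiable with gradient gφs
    (hgφs : ∀ z, HasGradientAt (fenchelConj φ) (gφs z) z)
    -- the solution of the high-resolution accelerated mirror descent ODE
    (X Z X' Z' : ℝ → EuclideanSpace ℝ (Fin n))
    (x₀ z₀ xs zs : EuclideanSpace ℝ (Fin n))
    (hX : ∀ t, 0 < t → HasDerivAt X (X' t) t)
    (hZ : ∀ t, 0 < t → HasDerivAt Z (Z' t) t)
    (hflow₁ : ∀ t, 0 < t → Z' t = -((t * σ) / 2) • f' (X t))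
    (hflow₂ : ∀ t, 0 < t →
      X' t = (2 / t) • gφs (Z t) - (2 / t) • X t - Real.sqrt s • f' (X t))
    (hX0 : X 0 = x₀) (hZ0 : Z 0 = z₀) (hx₀ : gφs z₀ = x₀) (hX'0 : X' 0 = 0)
    -- x* is a global minimizer of f and ∇φ*(z*) = x*
    (hxs : ∀ w, f xs ≤ f w) (hzs : gφs zs = xs) :
    Tendsto (fun t : ℝ => t ^ 3 * sInf ((fun u => ‖f' (X u)‖ ^ 2) '' Set.Icc 0 t))
      atTop (𝓝 0) :=
  accelerated_mirror_flow_gradient_rate_general f φ f' gφs σ L s hσ hs hfconv hfd hfL hφsc hgφs X Z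
    X' Z' xs zs hX hZ hflow₁ hflow₂ hxs hzs
end

section
/- Let p ≥ 2 be an integer and let φ : ℝⁿ → ℝ be a convex function that is σ-strongly convex of order p, i.e. its Bregman divergence satisfies D_φ(x,y) ≥ (σ/p)‖x−y‖^p for all x, y (σ > 0). Then the Fenchel conjugate φ* is differentiable and for all z, z' in dom(φ*), φ*(z') ≤ φ*(z) + ⟨∇φ*(z), z'−z⟩ + ((p−1)/p)(1/σ)^{1/(p−1)} ‖z'−z‖_*^{p/(p−1)}. -/
open Set Filter Topology

/-- The Fenchel conjugate of `φ`, as a function on the dual space. -/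
noncomputable def fenchelDual {E : Type*} [NormedAddCommGroup E] [NormedSpace ℝ E]
    (φ : E → ℝ) (z : StrongDual ℝ E) : ℝ :=
  ⨆ x : E, (z x - φ x)

/-! Strong convexity of order `p` makes `w ↦ z w - φ w` coercive, so the supremum defining
`φ* z` is attained at some `x = g z`, where `z` is a subgradient of `φ`. The order-`p` growth
of `φ` holds around `x` for every subgradient, hence
`φ* z' - φ* z - (z' - z) x ≤ sup_r (‖z' - z‖ r - σ / p * r ^ p)`, which Young's inequality
evaluates to the stated bound. As `p / (p - 1) > 1`, this bound is `o(‖z' - z‖)`, and the left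
side is nonnegative, so `g z` is the derivative of `φ*` at `z`. -/

open Real in
theorem mul_sub_div_mul_rpow_le {p σ a r : ℝ} (hp : 1 < p) (hσ : 0 < σ) (ha : 0 ≤ a)
    (hr : 0 ≤ r) :
    a * r - σ / p * r ^ p ≤ (p - 1) / p * (1 / σ) ^ (1 / (p - 1)) * a ^ (p / (p - 1)) := by
  have hp0 : 0 < p := by linarith
  have hp1 : 0 < p - 1 := by linarith
  -- Young's inequality for the factorization `a * r = (σ ^ (1/p) * r) * (σ ^ (-1/p) * a)`
  have young := young_inequality_of_nonneg (mul_nonneg (rpow_nonneg hσ.le (1 / p)) hr)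
    (mul_nonneg (rpow_nonneg hσ.le (-(1 / p))) ha) (HolderConjugate.conjExponent hp)
  have hprod : σ ^ (1 / p) * r * (σ ^ (-(1 / p)) * a) = a * r := by
    rw [mul_mul_mul_comm, ← rpow_add hσ, add_neg_cancel, rpow_zero, one_mul, mul_comm]
  have hfst : (σ ^ (1 / p) * r) ^ p = σ * r ^ p := by
    rw [mul_rpow (rpow_nonneg hσ.le _) hr, ← rpow_mul hσ.le, one_div_mul_cancel hp0.ne',
      rpow_one]
  have hsnd : (σ ^ (-(1 / p)) * a) ^ p.conjExponent =
      (1 / σ) ^ (1 / (p - 1)) * a ^ (p / (p - 1)) := by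
    rw [mul_rpow (rpow_nonneg hσ.le _) ha, ← rpow_mul hσ.le, one_div σ, inv_rpow hσ.le,
      ← rpow_neg hσ.le, conjExponent]
    congr 2
    field_simp
  rw [hprod, hfst, hsnd, conjExponent] at young
  have hcoef : (p - 1) / p = 1 / (p / (p - 1)) := by field_simp
  rw [hcoef]
  linarith [show σ * r ^ p / p = σ / p * r ^ p by ring,
    one_div_mul_eq_div (p / (p - 1)) ((1 / σ) ^ (1 / (p - 1)) * a ^ (p / (p - 1)))]

section Differentiability

variable {𝕜 F G : Type*} [NontriviallyNormedField 𝕜] [NormedAddCommGroup F] [NormedSpace 𝕜 F]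
  [NormedAddCommGroup G] [NormedSpace 𝕜 G]

open Asymptotics

theorem Asymptotics.isLittleO_norm_rpow_id {q : ℝ} (hq : 1 < q) :
    (fun x : F => ‖x‖ ^ q) =o[𝓝 0] fun x => x := by
  have hsmall : (fun x : F => ‖x‖ ^ (q - 1)) =o[𝓝 0] fun _ => (1 : ℝ) := by
    rw [isLittleO_one_iff]
    simpa [Real.zero_rpow (sub_pos.2 hq).ne'] using
      tendsto_norm_zero.rpow_const (Or.inr (sub_pos.2 hq).le)
  have hsplit : ∀ x : F, ‖x‖ ^ (q - 1) * ‖x‖ = ‖x‖ ^ q := fun x => by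
    rw [← Real.rpow_add_one' (norm_nonneg x) (by linarith), sub_add_cancel]
  exact isLittleO_norm_right.1 <| by
    simpa only [hsplit, one_mul] using hsmall.mul_isBigO (isBigO_refl (‖·‖) _)

theorem hasFDerivAt_of_norm_sub_le_rpow {f : F → G} {f' : F →L[𝕜] G} {x : F} {C q : ℝ}
    (hq : 1 < q) (hf : ∀ y, ‖f y - f x - f' (y - x)‖ ≤ C * ‖y - x‖ ^ q) :
    HasFDerivAt f f' x := by
  rw [hasFDerivAt_iff_isLittleO_nhds_zero]
  refine (isBigO_of_le' (c := C) _ fun h => ?_).trans_isLittleO (isLittleO_norm_rpow_id hq)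
  simpa [Real.norm_of_nonneg (Real.rpow_nonneg (norm_nonneg h) q)] using hf (x + h)

end Differentiability

section FenchelDual

variable {E : Type*} [NormedAddCommGroup E] [NormedSpace ℝ E] {φ : E → ℝ}
  {z z' : StrongDual ℝ E} {x : E}

theorem fenchelDual_eq_of_forall_le (hx : ∀ w, z w - φ w ≤ z x - φ x) :
    fenchelDual φ z = z x - φ x :=
  le_antisymm (ciSup_le hx) (le_ciSup ⟨_, forall_mem_range.2 hx⟩ x)

theorem fenchelDual_add_apply_sub_le (hx : ∀ w, z w - φ w ≤ z x - φ x)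
    (hz' : BddAbove (range fun w => z' w - φ w)) :
    fenchelDual φ z + (z' - z) x ≤ fenchelDual φ z' := by
  have hx' : z' x - φ x ≤ fenchelDual φ z' := le_ciSup hz' x
  rw [fenchelDual_eq_of_forall_le hx, sub_apply]
  linarith

end FenchelDual

section StronglyConvexOfOrder

variable {E : Type*} [NormedAddCommGroup E] [NormedSpace ℝ E]

def StronglyConvexOfOrder (p : ℕ) (σ : ℝ) (φ : E → ℝ) (φ' : E → StrongDual ℝ E) : Prop :=
  ∀ x y, σ / p * ‖x - y‖ ^ p ≤ φ x - φ y - φ' y (x - y)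

variable {p : ℕ} {σ : ℝ} {φ : E → ℝ} {φ' : E → StrongDual ℝ E}

theorem StronglyConvexOfOrder.add_le_of_subgradient (h : StronglyConvexOfOrder p σ φ φ')
    (hσ : 0 ≤ σ) {x : E} {q : StrongDual ℝ E} (hq : ∀ w, φ x + q (w - x) ≤ φ w) (w : E) :
    φ x + q (w - x) + σ / p * ‖w - x‖ ^ p ≤ φ w := by
  set u := w - x
  -- compare `x` and `w` through `y = x + t • u` and let `t → 0`
  have key : ∀ t ∈ Ioo (0 : ℝ) 1, σ / p * ((1 - t) * ‖u‖) ^ p ≤ φ w - φ x - q u := by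
    rintro t ⟨ht0, ht1⟩
    have hwy : w - (x + t • u) = (1 - t) • u := by simp only [u]; module
    have hxy : x - (x + t • u) = (-t) • u := by module
    have hw := h w (x + t • u)
    have hx := h x (x + t • u)
    have hy := hq (x + t • u)
    rw [hwy, norm_smul, Real.norm_of_nonneg (by linarith), map_smul, smul_eq_mul] at hw
    rw [hxy, norm_smul, map_smul, smul_eq_mul] at hx
    rw [add_sub_cancel_left, map_smul, smul_eq_mul] at hy
    have hx0 : 0 ≤ σ / p * (‖-t‖ * ‖u‖) ^ p := by positivity
    have : t * (σ / p * ((1 - t) * ‖u‖) ^ p) ≤ t * (φ w - φ x - q u) := by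
      nlinarith [mul_le_mul_of_nonneg_left hw ht0.le]
    exact le_of_mul_le_mul_left this ht0
  have hlim : Tendsto (fun t : ℝ => σ / p * ((1 - t) * ‖u‖) ^ p) (𝓝[>] 0)
      (𝓝 (σ / p * ((1 - 0) * ‖u‖) ^ p)) :=
    (Continuous.tendsto (by fun_prop) 0).mono_left nhdsWithin_le_nhds
  have hev : ∀ᶠ t in 𝓝[>] (0 : ℝ), σ / p * ((1 - t) * ‖u‖) ^ p ≤ φ w - φ x - q u := by
    filter_upwards [Ioo_mem_nhdsGT one_pos] using key
  have := le_of_tendsto hlim hev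
  rw [sub_zero, one_mul] at this
  linarith

theorem StronglyConvexOfOrder.exists_forall_apply_sub_le [FiniteDimensional ℝ E]
    (h : StronglyConvexOfOrder p σ φ φ') (hp : 1 < p) (hσ : 0 < σ) (hφ : Continuous φ)
    (z : StrongDual ℝ E) : ∃ x, ∀ w, z w - φ w ≤ z x - φ x := by
  -- spend half of the growth `σ / p * ‖w‖ ^ p` on absorbing the linear term
  obtain ⟨K, hbound⟩ : ∃ K, ∀ w, z w - φ w ≤ K - σ / 2 / p * ‖w‖ ^ p := by
    refine ⟨((p : ℝ) - 1) / p * (1 / (σ / 2)) ^ (1 / ((p : ℝ) - 1)) *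
      ‖z - φ' 0‖ ^ ((p : ℝ) / (p - 1)) - φ 0, fun w => ?_⟩
    have hw : σ / p * ‖w‖ ^ p ≤ φ w - φ 0 - φ' 0 w := by simpa using h w 0
    have hlin : (z - φ' 0) w ≤ ‖z - φ' 0‖ * ‖w‖ :=
      (Real.le_norm_self _).trans ((z - φ' 0).le_opNorm w)
    have hyoung := mul_sub_div_mul_rpow_le (p := p) (by exact_mod_cast hp) (half_pos hσ)
      (norm_nonneg (z - φ' 0)) (norm_nonneg w)
    rw [Real.rpow_natCast] at hyoung
    rw [sub_apply] at hlin
    linarith [show σ / p * ‖w‖ ^ p = 2 * (σ / 2 / p * ‖w‖ ^ p) by ring]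
  have hlim : Tendsto (fun w : E => K - σ / 2 / p * ‖w‖ ^ p) (cocompact E) atBot := by
    simpa only [sub_eq_add_neg, Function.comp_def] using tendsto_atBot_add_const_left _ _
      (tendsto_neg_atTop_atBot.comp (((tendsto_pow_atTop (by omega)).comp
        tendsto_norm_cocompact_atTop).const_mul_atTop (by positivity)))
  exact (z.continuous.sub hφ).exists_forall_ge (tendsto_atBot_mono hbound hlim)

theorem StronglyConvexOfOrder.fenchelDual_le (h : StronglyConvexOfOrder p σ φ φ') (hp : 1 < p)
    (hσ : 0 < σ) {z : StrongDual ℝ E} {x : E} (hx : ∀ w, z w - φ w ≤ z x - φ x)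
    (z' : StrongDual ℝ E) :
    fenchelDual φ z' ≤ fenchelDual φ z + (z' - z) x +
      ((p : ℝ) - 1) / p * (1 / σ) ^ (1 / ((p : ℝ) - 1)) * ‖z' - z‖ ^ ((p : ℝ) / (p - 1)) := by
  have hsub : ∀ w, φ x + z (w - x) ≤ φ w := fun w => by linarith [hx w, map_sub z w x]
  rw [fenchelDual_eq_of_forall_le hx]
  refine ciSup_le fun w => ?_
  have hgrowth := h.add_le_of_subgradient hσ.le hsub w
  have hlin : (z' - z) (w - x) ≤ ‖z' - z‖ * ‖w - x‖ :=
    (Real.le_norm_self _).trans ((z' - z).le_opNorm _)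
  have hyoung := mul_sub_div_mul_rpow_le (p := p) (by exact_mod_cast hp) hσ
    (norm_nonneg (z' - z)) (norm_nonneg (w - x))
  rw [Real.rpow_natCast] at hyoung
  simp only [map_sub, sub_apply] at hgrowth hlin ⊢
  linarith

end StronglyConvexOfOrder

theorem conjugate_smoothness_of_higher_order_strong_convexity_general
    {E : Type*} [NormedAddCommGroup E] [NormedSpace ℝ E] [FiniteDimensional ℝ E]
    (p : ℕ) (hp : 2 ≤ p) (σ : ℝ) (hσ : 0 < σ)
    (φ : E → ℝ) (φ' : E → StrongDual ℝ E)
    -- φ is convex with subgradient selection φ'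
    (hφconv : ConvexOn ℝ Set.univ φ)
    -- φ is σ-strongly convex of order p: D_φ(x, y) ≥ (σ/p)‖x − y‖^p
    (hφsc : ∀ x y, (σ / p) * ‖x - y‖ ^ p ≤ φ x - φ y - φ' y (x - y)) :
    ∃ g : StrongDual ℝ E → E,
      (∀ z, HasFDerivAt (fenchelDual φ) (NormedSpace.inclusionInDoubleDual ℝ E (g z)) z) ∧
      ∀ z z', fenchelDual φ z' ≤ fenchelDual φ z + (z' - z) (g z) +
        (((p : ℝ) - 1) / p) * (1 / σ) ^ ((1 : ℝ) / ((p : ℝ) - 1)) *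
          ‖z' - z‖ ^ ((p : ℝ) / ((p : ℝ) - 1)) := by
  have hsc : StronglyConvexOfOrder p σ φ φ' := hφsc
  have hφ : Continuous φ := continuousOn_univ.1 (hφconv.continuousOn isOpen_univ)
  choose g hg using hsc.exists_forall_apply_sub_le hp hσ hφ
  have hupper := fun z => hsc.fenchelDual_le hp hσ (hg z)
  have hlower : ∀ z z', fenchelDual φ z + (z' - z) (g z) ≤ fenchelDual φ z' := fun z z' =>
    fenchelDual_add_apply_sub_le (hg z) ⟨_, forall_mem_range.2 (hg z')⟩
  have hp₁ : (1 : ℝ) < p := by exact_mod_cast hp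
  have hq : (1 : ℝ) < p / (p - 1) := by
    rw [one_lt_div (by linarith)]
    linarith
  set C : ℝ := ((p : ℝ) - 1) / p * (1 / σ) ^ (1 / ((p : ℝ) - 1))
  have hC : 0 ≤ C := mul_nonneg (div_nonneg (by linarith) (by linarith)) (by positivity)
  refine ⟨g, fun z => hasFDerivAt_of_norm_sub_le_rpow (C := C) hq fun z' => ?_, hupper⟩
  rw [NormedSpace.dual_def, Real.norm_eq_abs, abs_le]
  have hrem : 0 ≤ C * ‖z' - z‖ ^ ((p : ℝ) / (p - 1)) := mul_nonneg hC (by positivity)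
  constructor <;> linarith [hupper z z', hlower z z']

/-- Lemma 2: if `φ` is `σ`-strongly convex of order `p`, then its Fenchel conjugate `φ*` is
differentiable and satisfies
`φ*(z') ≤ φ*(z) + ⟨∇φ*(z), z'−z⟩ + ((p−1)/p)(1/σ)^{1/(p−1)}‖z'−z‖_*^{p/(p−1)}`. -/
theorem conjugate_smoothness_of_higher_order_strong_convexity
    {E : Type*} [NormedAddCommGroup E] [NormedSpace ℝ E] [FiniteDimensional ℝ E]
    (p : ℕ) (hp : 2 ≤ p) (σ : ℝ) (hσ : 0 < σ)
    (φ : E → ℝ) (φ' : E → StrongDual ℝ E)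
    -- φ is convex with subgradient selection φ'
    (hφconv : ConvexOn ℝ Set.univ φ)
    (hsub : ∀ x w, φ x + φ' x (w - x) ≤ φ w)
    -- φ is σ-strongly convex of order p: D_φ(x, y) ≥ (σ/p)‖x − y‖^p
    (hφsc : ∀ x y, (σ / p) * ‖x - y‖ ^ p ≤ φ x - φ y - φ' y (x - y)) :
    ∃ g : StrongDual ℝ E → E,
      (∀ z, HasFDerivAt (fenchelDual φ) (NormedSpace.inclusionInDoubleDual ℝ E (g z)) z) ∧
      ∀ z z', fenchelDual φ z' ≤ fenchelDual φ z + (z' - z) (g z) +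
        (((p : ℝ) - 1) / p) * (1 / σ) ^ ((1 : ℝ) / ((p : ℝ) - 1)) *
          ‖z' - z‖ ^ ((p : ℝ) / ((p : ℝ) - 1)) :=
  conjugate_smoothness_of_higher_order_strong_convexity_general p hp σ hσ φ φ' hφconv hφsc
end
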